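/- arXiv:2411.17463 — 6 statements merged into one kernel-verified Lean document; each statement's English description precedes it below -/
import Mathlib

section
/- (Proposition 1.) Let T ≥ 1 be a horizon, C : {1,…,T} → ℝ prices, and H a decision horizon with 1 ≤ H ≤ T. If there exist x̲ = (p̲^C, p̲^D, s̲) ∈ X̲ and x̄ = (p̄^C, p̄^D, s̄) ∈ X̄ with s̲_H = s̄_H (the paper's necessary and sufficient condition for T to be a forecast horizon), then min{ S̄ − S̲ − (Σ_{t=0}^{T−H−1} ρ^t)(Δt η^C P̄^C + (Δt/η^D) P̄^D), ρ^T S^init − S̲ + Δt η^C P̄^C Σ_{t=T−H}^{T−1} ρ^t − (Δt/η^D) P̄^D Σ_{t=0}^{T−H−1} ρ^t, S̄ − ρ^T S^init − Δt η^C P̄^C Σ_{t=0}^{T−H−1} ρ^t + (Δt/η^D) P̄^D Σ_{t=T−H}^{T−1} ρ^t } ≤ 0. -/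
open Finset

/-- Parameters of the energy storage system. -/
structure Params where
  Δt : ℝ
  ρ : ℝ
  ηC : ℝ
  ηD : ℝ
  PC : ℝ
  PD : ℝ
  Slo : ℝ
  Shi : ℝ
  Sinit : ℝ

/-- Validity of the parameters: Δt > 0, ρ ∈ (0,1], ηC, ηD ∈ (0,1],
P̄^C > 0, P̄^D > 0, S̲ ≤ S̄, S̲ ≤ S^init ≤ S̄. -/
def Params.Valid (P : Params) : Prop :=
  0 < P.Δt ∧ 0 < P.ρ ∧ P.ρ ≤ 1 ∧ 0 < P.ηC ∧ P.ηC ≤ 1 ∧ 0 < P.ηD ∧ P.ηD ≤ 1 ∧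
  0 < P.PC ∧ 0 < P.PD ∧ P.Slo ≤ P.Shi ∧ P.Slo ≤ P.Sinit ∧ P.Sinit ≤ P.Shi

/-- A feasible schedule over the horizon {1,…,T}, with the convention s 0 = S^init. -/
def Feasible (P : Params) (T : ℕ) (pC pD s : ℕ → ℝ) : Prop :=
  s 0 = P.Sinit ∧
  ∀ t : ℕ, 1 ≤ t → t ≤ T →
    (s t = P.ρ * s (t - 1) + P.Δt * (P.ηC * pC t - pD t / P.ηD) ∧
     P.Slo ≤ s t ∧ s t ≤ P.Shi ∧
     0 ≤ pC t ∧ pC t ≤ P.PC ∧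
     0 ≤ pD t ∧ pD t ≤ P.PD ∧
     pC t * pD t = 0)

/-- Profit Z = Σ_{t=1}^{T} Δt C_t (p^D_t − p^C_t). -/
noncomputable def profit (P : Params) (T : ℕ) (C pC pD : ℕ → ℝ) : ℝ :=
  ∑ t ∈ Finset.Icc 1 T, P.Δt * C t * (pD t - pC t)

/-- Optimal schedule of F(T, C, S^end): feasible, meets the terminal constraint
s_T = S^end, and maximizes profit among such schedules. -/
def Optimal (P : Params) (T : ℕ) (C : ℕ → ℝ) (Send : ℝ) (pC pD s : ℕ → ℝ) : Prop :=
  Feasible P T pC pD s ∧ s T = Send ∧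
  ∀ qC qD r : ℕ → ℝ, Feasible P T qC qD r → r T = Send →
    profit P T C qC qD ≤ profit P T C pC pD

/-- Minimum reachable level S̲_T at the end of the planning horizon. -/
noncomputable def SloT (P : Params) (T : ℕ) : ℝ :=
  max P.Slo (P.ρ ^ T * P.Sinit - P.Δt * (P.PD / P.ηD) * ∑ t ∈ Finset.range T, P.ρ ^ t)

/-- Maximum reachable level S̄_T at the end of the planning horizon. -/
noncomputable def ShiT (P : Params) (T : ℕ) : ℝ :=
  min P.Shi (P.ρ ^ T * P.Sinit + P.Δt * P.ηC * P.PC * ∑ t ∈ Finset.range T, P.ρ ^ t)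

lemma reach_upper (P : Params) (hP : P.Valid) (T : ℕ) (pC pD s : ℕ → ℝ)
    (hf : Feasible P T pC pD s) (a k : ℕ) (hab : a + k ≤ T) :
    s (a + k) ≤ P.ρ ^ k * s a + P.Δt * P.ηC * P.PC * ∑ t ∈ Finset.range k, P.ρ ^ t := by
  obtain ⟨hΔ, hρ, hρ1, hηC, hηC1, hηD, hηD1, hPC, hPD, _⟩ := hP
  induction k with
  | zero => simp
  | succ k ih =>
    have hab' : a + k ≤ T := by omega
    have ih' := ih hab'
    obtain ⟨hrec, _, _, hpC0, hpCu, hpD0, hpDu, _⟩ :=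
      hf.2 (a + k + 1) (by omega) (by omega)
    have hidx : a + k + 1 - 1 = a + k := by omega
    rw [hidx] at hrec
    have hstep : s (a + k + 1) ≤ P.ρ * s (a + k) + P.Δt * P.ηC * P.PC := by
      have h1 : 0 ≤ pD (a + k + 1) / P.ηD := div_nonneg hpD0 hηD.le
      nlinarith [mul_le_mul_of_nonneg_left hpCu (mul_nonneg hΔ.le hηC.le),
        mul_nonneg hΔ.le h1]
    have hsum : ∑ t ∈ Finset.range (k + 1), P.ρ ^ t
        = P.ρ * ∑ t ∈ Finset.range k, P.ρ ^ t + 1 := geom_sum_succ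
    have hmul := mul_le_mul_of_nonneg_left ih' hρ.le
    calc s (a + (k + 1)) = s (a + k + 1) := by ring_nf
      _ ≤ P.ρ * s (a + k) + P.Δt * P.ηC * P.PC := hstep
      _ ≤ P.ρ * (P.ρ ^ k * s a + P.Δt * P.ηC * P.PC * ∑ t ∈ Finset.range k, P.ρ ^ t)
            + P.Δt * P.ηC * P.PC := by linarith
      _ = P.ρ ^ (k + 1) * s a + P.Δt * P.ηC * P.PC
            * ∑ t ∈ Finset.range (k + 1), P.ρ ^ t := by rw [hsum]; ring

lemma reach_lower (P : Params) (hP : P.Valid) (T : ℕ) (pC pD s : ℕ → ℝ)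
    (hf : Feasible P T pC pD s) (a k : ℕ) (hab : a + k ≤ T) :
    P.ρ ^ k * s a - P.Δt / P.ηD * P.PD * ∑ t ∈ Finset.range k, P.ρ ^ t ≤ s (a + k) := by
  obtain ⟨hΔ, hρ, hρ1, hηC, hηC1, hηD, hηD1, hPC, hPD, _⟩ := hP
  induction k with
  | zero => simp
  | succ k ih =>
    have hab' : a + k ≤ T := by omega
    have ih' := ih hab'
    obtain ⟨hrec, _, _, hpC0, hpCu, hpD0, hpDu, _⟩ :=
      hf.2 (a + k + 1) (by omega) (by omega)
    have hidx : a + k + 1 - 1 = a + k := by omega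
    rw [hidx] at hrec
    have hstep : P.ρ * s (a + k) - P.Δt / P.ηD * P.PD ≤ s (a + k + 1) := by
      have h1 : pD (a + k + 1) / P.ηD ≤ P.PD / P.ηD := (div_le_div_iff_of_pos_right hηD).mpr hpDu
      have h2 : 0 ≤ P.ηC * pC (a + k + 1) := mul_nonneg hηC.le hpC0
      have h3 : P.Δt / P.ηD * P.PD = P.Δt * (P.PD / P.ηD) := by ring
      nlinarith [mul_le_mul_of_nonneg_left h1 hΔ.le, mul_nonneg hΔ.le h2]
    have hsum : ∑ t ∈ Finset.range (k + 1), P.ρ ^ t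
        = P.ρ * ∑ t ∈ Finset.range k, P.ρ ^ t + 1 := geom_sum_succ
    have hmul := mul_le_mul_of_nonneg_left ih' hρ.le
    calc P.ρ ^ (k + 1) * s a - P.Δt / P.ηD * P.PD
            * ∑ t ∈ Finset.range (k + 1), P.ρ ^ t
        = P.ρ * (P.ρ ^ k * s a - P.Δt / P.ηD * P.PD * ∑ t ∈ Finset.range k, P.ρ ^ t)
            - P.Δt / P.ηD * P.PD := by rw [hsum]; ring
      _ ≤ P.ρ * s (a + k) - P.Δt / P.ηD * P.PD := by linarith
      _ ≤ s (a + k + 1) := hstep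
      _ = s (a + (k + 1)) := by ring_nf

/-- Proposition 1: a necessary condition on T (relative to H) for the paper's
forecast-horizon condition s̲_H = s̄_H to hold. -/
theorem proposition1 (P : Params) (hP : P.Valid) (T : ℕ) (hT : 1 ≤ T)
    (C : ℕ → ℝ) (H : ℕ) (hH1 : 1 ≤ H) (hHT : H ≤ T)
    (pCl pDl sl : ℕ → ℝ) (hl : Optimal P T C (SloT P T) pCl pDl sl)
    (pCb pDb sb : ℕ → ℝ) (hb : Optimal P T C (ShiT P T) pCb pDb sb)
    (heq : sl H = sb H) :
    min (P.Shi - P.Slo - (∑ t ∈ Finset.range (T - H), P.ρ ^ t) *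
          (P.Δt * P.ηC * P.PC + P.Δt / P.ηD * P.PD))
      (min (P.ρ ^ T * P.Sinit - P.Slo
            + P.Δt * P.ηC * P.PC * (∑ t ∈ Finset.Ico (T - H) T, P.ρ ^ t)
            - P.Δt / P.ηD * P.PD * (∑ t ∈ Finset.range (T - H), P.ρ ^ t))
           (P.Shi - P.ρ ^ T * P.Sinit
            - P.Δt * P.ηC * P.PC * (∑ t ∈ Finset.range (T - H), P.ρ ^ t)
            + P.Δt / P.ηD * P.PD * (∑ t ∈ Finset.Ico (T - H) T, P.ρ ^ t))) ≤ 0 := by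
  obtain ⟨hΔ, hρ, hρ1, hηC, hηC1, hηD, hηD1, hPC, hPD, _⟩ := id hP
  have hH' : H + (T - H) = T := by omega
  -- reachability bounds from time H to time T
  have hub := reach_upper P hP T pCb pDb sb hb.1 H (T - H) (by omega)
  have hlb := reach_lower P hP T pCl pDl sl hl.1 H (T - H) (by omega)
  rw [hH'] at hub hlb
  have hslT : sl T = SloT P T := hl.2.1
  have hsbT : sb T = ShiT P T := hb.2.1
  -- key inequality
  have hkey : ShiT P T - SloT P T
      ≤ (P.Δt * P.ηC * P.PC + P.Δt / P.ηD * P.PD) * ∑ t ∈ Finset.range (T - H), P.ρ ^ t := by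
    rw [← hslT, ← hsbT]
    rw [heq] at hlb
    linarith
  have hsplit : (∑ t ∈ Finset.range T, P.ρ ^ t)
      = (∑ t ∈ Finset.range (T - H), P.ρ ^ t) + ∑ t ∈ Finset.Ico (T - H) T, P.ρ ^ t := by
    simp only [Finset.range_eq_Ico]
    exact (Finset.sum_Ico_consecutive (fun t => P.ρ ^ t) (n := T - H) (Nat.zero_le _) (by omega)).symm
  have hSI : 0 < ∑ t ∈ Finset.Ico (T - H) T, P.ρ ^ t :=
    Finset.sum_pos (fun i _ => pow_pos hρ i) (Finset.nonempty_Ico.mpr (by omega))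
  have hM : 0 < P.Δt * P.ηC * P.PC := by positivity
  have hD : 0 < P.Δt / P.ηD * P.PD := by positivity
  simp only [SloT, ShiT] at hkey
  rw [hsplit, show P.Δt * (P.PD / P.ηD) = P.Δt / P.ηD * P.PD from by ring] at hkey
  rcases max_choice P.Slo (P.ρ ^ T * P.Sinit - P.Δt / P.ηD * P.PD *
      ((∑ t ∈ Finset.range (T - H), P.ρ ^ t) + ∑ t ∈ Finset.Ico (T - H) T, P.ρ ^ t))
    with h1 | h1 <;>
  rcases min_choice P.Shi (P.ρ ^ T * P.Sinit + P.Δt * P.ηC * P.PC *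
      ((∑ t ∈ Finset.range (T - H), P.ρ ^ t) + ∑ t ∈ Finset.Ico (T - H) T, P.ρ ^ t))
    with h2 | h2 <;>
  rw [h1, h2] at hkey
  · exact (min_le_left _ _).trans (by linarith)
  · exact (min_le_right _ _).trans ((min_le_left _ _).trans (by linarith))
  · exact (min_le_right _ _).trans ((min_le_right _ _).trans (by linarith))
  · exfalso
    nlinarith [mul_pos hM hSI, mul_pos hD hSI]
end

section
/- (Marginal price relation, charge–discharge pair.) Let T ≥ 1 be a horizon, C : {1,…,T} → ℝ prices, S^end ∈ ℝ, and let x* = (p^{C*}, p^{D*}, s*) ∈ X(S^end) be an optimal schedule of F(T, C, S^end). Suppose t₁ < t₂ are in {1,…,T} with p^{C*}_{t₁} > 0, p^{D*}_{t₂} > 0, and s*_t > S̲ for all t ∈ {t₁,…,t₂−1}. Then C_{t₁} ≤ ρ^{t₂−t₁} η^C η^D C_{t₂}. -/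
/-!
Charging `ε` less at `t₁` lowers the state by `ρ^(t-t₁) Δt η^C ε` at every `t ∈ [t₁, t₂)`;
discharging `ρ^(t₂-t₁) η^C η^D ε` less at `t₂` then restores it exactly, so the state is
unchanged outside `[t₁, t₂)` and in particular `s_T = S^end` still holds. Since the state
stays strictly above `S̲` on `[t₁, t₂)` and both powers being lowered are positive, this
perturbation is feasible for small `ε > 0`. It changes the profit by
`Δt ε (C_{t₁} - ρ^(t₂-t₁) η^C η^D C_{t₂})`, which optimality forces to be nonpositive.
-/

open Finset

open Filter Topology

theorem eventually_mul_le_of_pos (a : ℝ) {b : ℝ} (hb : 0 < b) :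
    ∀ᶠ ε in 𝓝[>] (0 : ℝ), a * ε ≤ b :=
  nhdsWithin_le_nhds <|
    (continuous_const_mul a).tendsto' 0 0 (mul_zero a) |>.eventually (eventually_le_nhds hb)

theorem Pi.single_apply_mem_Icc {ι : Type*} [DecidableEq ι] {f : ι → ℝ} {i t : ι} {a : ℝ}
    (ha : 0 ≤ a) (hai : a ≤ f i) (hf : 0 ≤ f t) :
    0 ≤ (Pi.single i a : ι → ℝ) t ∧ (Pi.single i a : ι → ℝ) t ≤ f t := by
  rcases eq_or_ne t i with rfl | h
  · simp [ha, hai]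
  · simp [h, hf]

section Perturbation

variable {P : Params} {T : ℕ} {C pC pD s dC dD d : ℕ → ℝ}

theorem profit_sub :
    profit P T C (pC - dC) (pD - dD) = profit P T C pC pD - profit P T C dC dD := by
  simp only [profit, ← sum_sub_distrib, Pi.sub_apply]
  exact sum_congr rfl fun _ _ ↦ by ring

theorem profit_single {i j : ℕ} (hi : i ∈ Icc 1 T) (hj : j ∈ Icc 1 T) (a b : ℝ) :
    profit P T C (Pi.single i a) (Pi.single j b) = P.Δt * (C j * b - C i * a) := by
  simp [profit, mul_sub, sum_sub_distrib, Pi.single_apply, hi, hj]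
  ring

theorem Feasible.sub (h : Feasible P T pC pD s) (hd₀ : d 0 = 0)
    (hd : ∀ t, 1 ≤ t → t ≤ T → d t = P.ρ * d (t - 1) + P.Δt * (P.ηC * dC t - dD t / P.ηD))
    (hdC : ∀ t, 1 ≤ t → t ≤ T → 0 ≤ dC t ∧ dC t ≤ pC t)
    (hdD : ∀ t, 1 ≤ t → t ≤ T → 0 ≤ dD t ∧ dD t ≤ pD t)
    (hds : ∀ t, 1 ≤ t → t ≤ T → 0 ≤ d t ∧ P.Slo ≤ s t - d t) :
    Feasible P T (pC - dC) (pD - dD) (s - d) := by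
  refine ⟨by simp [h.1, hd₀], fun t ht hT ↦ ?_⟩
  obtain ⟨hs, -, hShi, hC₀, hCmax, hD₀, hDmax, hCD⟩ := h.2 t ht hT
  obtain ⟨hdC₀, hdCle⟩ := hdC t ht hT
  obtain ⟨hdD₀, hdDle⟩ := hdD t ht hT
  obtain ⟨hd₀, hdlo⟩ := hds t ht hT
  simp only [Pi.sub_apply]
  refine ⟨by rw [hs, hd t ht hT]; ring, hdlo, by linarith, by linarith, by linarith,
    by linarith, by linarith, ?_⟩
  rcases mul_eq_zero.1 hCD with hC | hD
  · simp [hC, le_antisymm (hC ▸ hdCle) hdC₀]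
  · simp [hD, le_antisymm (hD ▸ hdDle) hdD₀]

theorem Optimal.profit_nonneg_of_feasible_sub {Send : ℝ} (hx : Optimal P T C Send pC pD s)
    (hq : Feasible P T (pC - dC) (pD - dD) (s - d)) (hdT : d T = 0) :
    0 ≤ profit P T C dC dD := by
  have := hx.2.2 _ _ _ hq (by simp [hx.2.1, hdT])
  rw [profit_sub] at this
  linarith

end Perturbation

noncomputable def chargeDeficit (P : Params) (t₁ t₂ : ℕ) (ε : ℝ) (t : ℕ) : ℝ :=
  if t₁ ≤ t ∧ t < t₂ then P.ρ ^ (t - t₁) * (P.Δt * P.ηC * ε) else 0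

section ChargeDeficit

variable {P : Params} {t₁ t₂ : ℕ} {ε : ℝ}

theorem chargeDeficit_of_lt (t : ℕ) (ht : t < t₁) : chargeDeficit P t₁ t₂ ε t = 0 :=
  if_neg fun h ↦ by omega

theorem chargeDeficit_of_le (t : ℕ) (ht : t₂ ≤ t) : chargeDeficit P t₁ t₂ ε t = 0 :=
  if_neg fun h ↦ by omega

theorem chargeDeficit_dynamics (hηD : P.ηD ≠ 0) (h12 : t₁ ≤ t₂) {t : ℕ} (ht : 1 ≤ t) :
    chargeDeficit P t₁ t₂ ε t = P.ρ * chargeDeficit P t₁ t₂ ε (t - 1) +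
      P.Δt * (P.ηC * (Pi.single t₁ ε : ℕ → ℝ) t -
        (Pi.single t₂ (P.ρ ^ (t₂ - t₁) * P.ηC * P.ηD * ε) : ℕ → ℝ) t / P.ηD) := by
  unfold chargeDeficit
  rcases lt_trichotomy t t₁ with h | rfl | h
  · rw [if_neg (by omega), if_neg (by omega), Pi.single_eq_of_ne (by omega),
      Pi.single_eq_of_ne (by omega)]
    simp
  · rcases h12.lt_or_eq with h12 | rfl
    · rw [if_pos ⟨le_rfl, h12⟩, if_neg (by omega), Pi.single_eq_same,
        Pi.single_eq_of_ne h12.ne, Nat.sub_self]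
      ring
    · rw [if_neg (by omega), if_neg (by omega), Pi.single_eq_same, Pi.single_eq_same]
      field_simp
      simp
  · have hpow : ∀ u, t₁ < u → P.ρ ^ (u - t₁) = P.ρ * P.ρ ^ (u - 1 - t₁) := fun u hu ↦ by
      rw [← pow_succ']; congr 1; omega
    rw [Pi.single_eq_of_ne h.ne']
    rcases lt_trichotomy t t₂ with h2 | rfl | h2
    · rw [if_pos ⟨h.le, h2⟩, if_pos ⟨by omega, by omega⟩, Pi.single_eq_of_ne h2.ne, hpow t h]
      ring
    · rw [if_neg (by omega), if_pos ⟨by omega, by omega⟩, Pi.single_eq_same, hpow t h]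
      field_simp
      ring
    · rw [if_neg (by omega), if_neg (by omega), Pi.single_eq_of_ne h2.ne']
      ring

theorem chargeDeficit_nonneg (hρ : 0 ≤ P.ρ) (hΔt : 0 ≤ P.Δt) (hηC : 0 ≤ P.ηC) (hε : 0 ≤ ε)
    (t : ℕ) : 0 ≤ chargeDeficit P t₁ t₂ ε t := by
  unfold chargeDeficit
  split_ifs <;> positivity

theorem chargeDeficit_le (hρ₀ : 0 ≤ P.ρ) (hρ₁ : P.ρ ≤ 1) (hΔt : 0 ≤ P.Δt) (hηC : 0 ≤ P.ηC)
    (hε : 0 ≤ ε) (t : ℕ) : chargeDeficit P t₁ t₂ ε t ≤ P.Δt * P.ηC * ε := by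
  unfold chargeDeficit
  split_ifs
  · exact mul_le_of_le_one_left (by positivity) (pow_le_one₀ hρ₀ hρ₁)
  · positivity

theorem le_sub_chargeDeficit {s : ℕ → ℝ} {L : ℝ} (hρ₀ : 0 ≤ P.ρ) (hρ₁ : P.ρ ≤ 1)
    (hΔt : 0 ≤ P.Δt) (hηC : 0 ≤ P.ηC) (hε : 0 ≤ ε)
    (hs : ∀ t ∈ Ico t₁ t₂, P.Δt * P.ηC * ε ≤ s t - L) {t : ℕ} (ht : L ≤ s t) :
    L ≤ s t - chargeDeficit P t₁ t₂ ε t := by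
  by_cases h : t ∈ Ico t₁ t₂
  · linarith [chargeDeficit_le (t₁ := t₁) (t₂ := t₂) hρ₀ hρ₁ hΔt hηC hε t, hs t h]
  · rw [chargeDeficit, if_neg (by simpa using h)]
    linarith

end ChargeDeficit

theorem marginal_charge_discharge_general (P : Params) (hP : P.Valid) (T : ℕ)
    (C : ℕ → ℝ) (Send : ℝ) (pC pD s : ℕ → ℝ) (hx : Optimal P T C Send pC pD s)
    (t₁ t₂ : ℕ) (ht₁ : 1 ≤ t₁) (h12 : t₁ < t₂) (ht₂ : t₂ ≤ T)
    (hc : 0 < pC t₁) (hd : 0 < pD t₂)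
    (hs : ∀ t : ℕ, t₁ ≤ t → t ≤ t₂ - 1 → P.Slo < s t) :
    C t₁ ≤ P.ρ ^ (t₂ - t₁) * P.ηC * P.ηD * C t₂ := by
  obtain ⟨hΔt, hρ₀, hρ₁, hηC, -, hηD, -⟩ := hP
  set K := P.ρ ^ (t₂ - t₁) * P.ηC * P.ηD
  have hF := hx.1.2
  have hslack : ∀ t ∈ Ico t₁ t₂, 0 < s t - P.Slo := fun t ht ↦
    sub_pos.2 <| hs t (mem_Ico.1 ht).1 (Nat.le_sub_one_of_lt (mem_Ico.1 ht).2)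
  obtain ⟨ε, hε, hεC, hεD, hεs⟩ : ∃ ε : ℝ, 0 < ε ∧ 1 * ε ≤ pC t₁ ∧ K * ε ≤ pD t₂ ∧
      ∀ t ∈ Ico t₁ t₂, P.Δt * P.ηC * ε ≤ s t - P.Slo :=
    (eventually_mem_nhdsWithin.and <| (eventually_mul_le_of_pos 1 hc).and <|
      (eventually_mul_le_of_pos K hd).and <| (eventually_all_finset _).2 fun t ht ↦
        eventually_mul_le_of_pos _ (hslack t ht)).exists
  have hq := hx.1.sub (d := chargeDeficit P t₁ t₂ ε) (chargeDeficit_of_lt 0 (by omega))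
    (fun t ht _ ↦ chargeDeficit_dynamics hηD.ne' h12.le ht)
    (fun t ht hT ↦ Pi.single_apply_mem_Icc hε.le (by linarith) (hF t ht hT).2.2.2.1)
    (fun t ht hT ↦ Pi.single_apply_mem_Icc (by positivity) hεD (hF t ht hT).2.2.2.2.2.1)
    (fun t ht hT ↦ ⟨chargeDeficit_nonneg hρ₀.le hΔt.le hηC.le hε.le t,
      le_sub_chargeDeficit hρ₀.le hρ₁ hΔt.le hηC.le hε.le hεs (hF t ht hT).2.1⟩)
  have hgain := hx.profit_nonneg_of_feasible_sub hq (chargeDeficit_of_le T ht₂)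
  rw [profit_single (mem_Icc.2 ⟨ht₁, by omega⟩) (mem_Icc.2 ⟨by omega, ht₂⟩),
    show P.Δt * (C t₂ * (K * ε) - C t₁ * ε) = P.Δt * ε * (K * C t₂ - C t₁) by ring,
    mul_nonneg_iff_of_pos_left (by positivity)] at hgain
  linarith

/-- Marginal price relation (charge–discharge pair): if an optimal schedule
charges at t₁ and discharges at t₂ > t₁, with the state of energy strictly above
S̲ on {t₁,…,t₂−1}, then C_{t₁} ≤ ρ^{t₂−t₁} η^C η^D C_{t₂}. -/
theorem marginal_charge_discharge (P : Params) (hP : P.Valid) (T : ℕ) (hT : 1 ≤ T)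
    (C : ℕ → ℝ) (Send : ℝ) (pC pD s : ℕ → ℝ) (hx : Optimal P T C Send pC pD s)
    (t₁ t₂ : ℕ) (ht₁ : 1 ≤ t₁) (h12 : t₁ < t₂) (ht₂ : t₂ ≤ T)
    (hc : 0 < pC t₁) (hd : 0 < pD t₂)
    (hs : ∀ t : ℕ, t₁ ≤ t → t ≤ t₂ - 1 → P.Slo < s t) :
    C t₁ ≤ P.ρ ^ (t₂ - t₁) * P.ηC * P.ηD * C t₂ :=
  marginal_charge_discharge_general P hP T C Send pC pD s hx t₁ t₂ ht₁ h12 ht₂ hc hd hs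
end

section
/- (Marginal price relation, discharge–discharge pair.) Let T ≥ 1 be a horizon, C : {1,…,T} → ℝ prices, S^end ∈ ℝ, and let x* = (p^{C*}, p^{D*}, s*) ∈ X(S^end) be an optimal schedule of F(T, C, S^end). Suppose t₁ < t₂ are in {1,…,T} with p^{C*}_{t₁} = 0, p^{D*}_{t₁} < P̄^D, p^{D*}_{t₂} > 0, and s*_t > S̲ for all t ∈ {t₁,…,t₂−1}. Then C_{t₁} ≤ ρ^{t₂−t₁} C_{t₂}. -/
open Finset

set_option maxHeartbeats 1000000 in
/-- Marginal price relation (discharge–discharge pair): if an optimal schedule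
does not charge at t₁ and has slack discharge capacity there, discharges at
t₂ > t₁, with the state of energy strictly above S̲ on {t₁,…,t₂−1}, then
C_{t₁} ≤ ρ^{t₂−t₁} C_{t₂}. -/
theorem marginal_discharge_discharge (P : Params) (hP : P.Valid) (T : ℕ) (hT : 1 ≤ T)
    (C : ℕ → ℝ) (Send : ℝ) (pC pD s : ℕ → ℝ) (hx : Optimal P T C Send pC pD s)
    (t₁ t₂ : ℕ) (ht₁ : 1 ≤ t₁) (h12 : t₁ < t₂) (ht₂ : t₂ ≤ T)
    (hc : pC t₁ = 0) (hslack : pD t₁ < P.PD) (hd : 0 < pD t₂)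
    (hs : ∀ t : ℕ, t₁ ≤ t → t ≤ t₂ - 1 → P.Slo < s t) :
    C t₁ ≤ P.ρ ^ (t₂ - t₁) * C t₂ := by
  obtain ⟨hΔt, hρ, hρ1, hηC, hηC1, hηD, hηD1, hPC, hPD, hSS, hSi1, hSi2⟩ := hP
  obtain ⟨⟨hs0, hfeas⟩, hsT, hopt⟩ := hx
  set d := t₂ - t₁ with hd_def
  have ht₂1 : 1 ≤ t₂ := le_trans ht₁ h12.le
  have hne : (Finset.Icc t₁ (t₂ - 1)).Nonempty := ⟨t₁, by simp only [Finset.mem_Icc]; omega⟩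
  set m := (Finset.Icc t₁ (t₂ - 1)).inf' hne (fun t => s t - P.Slo) with hm_def
  have hm_pos : 0 < m := by
    rw [hm_def, Finset.lt_inf'_iff]
    intro t ht
    simp only [Finset.mem_Icc] at ht
    have := hs t ht.1 ht.2
    linarith
  have hρd_pos : 0 < P.ρ ^ d := pow_pos hρ d
  set ε := min (min (P.PD - pD t₁) (pD t₂ / P.ρ ^ d)) (P.ηD / P.Δt * m) with hε_def
  have hε_pos : 0 < ε :=
    lt_min (lt_min (by linarith) (div_pos hd hρd_pos)) (mul_pos (div_pos hηD hΔt) hm_pos)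
  have hε1 : ε ≤ P.PD - pD t₁ := le_trans (min_le_left _ _) (min_le_left _ _)
  have hε2 : ε ≤ pD t₂ / P.ρ ^ d := le_trans (min_le_left _ _) (min_le_right _ _)
  have hε3 : ε ≤ P.ηD / P.Δt * m := min_le_right _ _
  have hεm : P.Δt / P.ηD * ε ≤ m := by
    have h1 : P.Δt / P.ηD * ε ≤ P.Δt / P.ηD * (P.ηD / P.Δt * m) :=
      mul_le_mul_of_nonneg_left hε3 (by positivity)
    have h2 : P.Δt / P.ηD * (P.ηD / P.Δt * m) = m := by field_simp
    linarith
  have hρdε : P.ρ ^ d * ε ≤ pD t₂ := by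
    have := mul_le_mul_of_nonneg_left hε2 hρd_pos.le
    rwa [mul_div_cancel₀ _ hρd_pos.ne'] at this
  set qD : ℕ → ℝ := fun t =>
    pD t + (if t = t₁ then ε else 0) - (if t = t₂ then P.ρ ^ d * ε else 0) with hq
  set r : ℕ → ℝ := fun t =>
    s t - (if t₁ ≤ t ∧ t < t₂ then P.Δt / P.ηD * P.ρ ^ (t - t₁) * ε else 0) with hrdef
  have hq_eq : ∀ t, t ≠ t₁ → t ≠ t₂ → qD t = pD t := by
    intro t h1 h2; simp [hq, h1, h2]
  have hr_out : ∀ t, ¬(t₁ ≤ t ∧ t < t₂) → r t = s t := by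
    intro t h; simp [hrdef, h]
  have hr_in : ∀ t, t₁ ≤ t → t < t₂ → r t = s t - P.Δt / P.ηD * P.ρ ^ (t - t₁) * ε := by
    intro t h1 h2; simp [hrdef, h1, h2]
  have hr_bound : ∀ t, t₁ ≤ t → t < t₂ → P.Δt / P.ηD * P.ρ ^ (t - t₁) * ε ≤ s t - P.Slo := by
    intro t h1 h2
    have hpow : P.ρ ^ (t - t₁) ≤ 1 := pow_le_one₀ hρ.le hρ1
    have h3 : P.Δt / P.ηD * P.ρ ^ (t - t₁) * ε ≤ P.Δt / P.ηD * ε := by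
      have := mul_le_mul_of_nonneg_left hpow (le_of_lt (div_pos hΔt hηD))
      nlinarith [hε_pos.le]
    have hmem : t ∈ Finset.Icc t₁ (t₂ - 1) := by simp only [Finset.mem_Icc]; omega
    have h4 : m ≤ s t - P.Slo := Finset.inf'_le _ hmem
    linarith
  have hpC2 : pC t₂ = 0 := by
    have := (hfeas t₂ ht₂1 ht₂).2.2.2.2.2.2.2
    rcases mul_eq_zero.mp this with h | h
    · exact h
    · exact absurd h (ne_of_gt hd)
  have hηD' : P.ηD ≠ 0 := ne_of_gt hηD
  have hfeas' : Feasible P T pC qD r := by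
    constructor
    · have h0 : ¬(t₁ ≤ 0 ∧ 0 < t₂) := by omega
      rw [hr_out 0 h0]; exact hs0
    · intro t h1t htT
      obtain ⟨feq, flo, fhi, fc0, fcP, fd0, fdP, fcomp⟩ := hfeas t h1t htT
      rcases lt_or_ge t t₁ with hlt | hge
      · -- t < t₁ : unchanged
        have e1 : qD t = pD t := hq_eq t (by omega) (by omega)
        have e2 : r t = s t := hr_out t (by omega)
        have e3 : r (t - 1) = s (t - 1) := hr_out _ (by omega)
        rw [e1, e2, e3]
        exact ⟨feq, flo, fhi, fc0, fcP, fd0, fdP, fcomp⟩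
      rcases eq_or_lt_of_le hge with heq | hgt
      · -- t = t₁
        have heq' : t = t₁ := heq.symm
        have hne2 : t ≠ t₂ := by omega
        have e1 : qD t = pD t + ε := by
          simp only [hq]; rw [if_pos heq', if_neg hne2]; ring
        have e2 : r t = s t - P.Δt / P.ηD * ε := by
          rw [hr_in t (by omega) (by omega), (by omega : t - t₁ = 0), pow_zero, mul_one]
        have e3 : r (t - 1) = s (t - 1) := hr_out _ (by omega)
        rw [e1, e2, e3]
        refine ⟨?_, ?_, ?_, fc0, fcP, by linarith, ?_, ?_⟩
        · rw [feq]; field_simp; ring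
        · have hb := hr_bound t (by omega) (by omega)
          rw [(by omega : t - t₁ = 0), pow_zero, mul_one] at hb
          linarith
        · have : 0 ≤ P.Δt / P.ηD * ε := by positivity
          linarith
        · rw [heq']; linarith
        · rw [heq', hc]; ring
      rcases lt_or_ge t t₂ with hlt2 | hge2
      · -- t₁ < t < t₂
        have e1 : qD t = pD t := hq_eq t (by omega) (by omega)
        have e2 : r t = s t - P.Δt / P.ηD * P.ρ ^ (t - t₁) * ε := hr_in t (by omega) hlt2
        have e3 : r (t - 1) = s (t - 1) - P.Δt / P.ηD * P.ρ ^ (t - 1 - t₁) * ε :=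
          hr_in _ (by omega) (by omega)
        have epow : P.ρ ^ (t - t₁) = P.ρ ^ (t - 1 - t₁) * P.ρ := by
          rw [← pow_succ]; congr 1; omega
        rw [e1, e2, e3]
        refine ⟨?_, ?_, ?_, fc0, fcP, fd0, fdP, fcomp⟩
        · rw [feq, epow]; ring
        · have := hr_bound t (by omega) hlt2; linarith
        · have : 0 ≤ P.Δt / P.ηD * P.ρ ^ (t - t₁) * ε := by positivity
          linarith
      rcases eq_or_lt_of_le hge2 with heq2' | hgt2
      swap
      · -- t > t₂ : unchanged
        have e1 : qD t = pD t := hq_eq t (by omega) (by omega)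
        have e2 : r t = s t := hr_out t (by omega)
        have e3 : r (t - 1) = s (t - 1) := hr_out _ (by omega)
        rw [e1, e2, e3]
        exact ⟨feq, flo, fhi, fc0, fcP, fd0, fdP, fcomp⟩
      have heq2 : t = t₂ := heq2'.symm
      -- t = t₂
      have e1 : qD t = pD t - P.ρ ^ d * ε := by
        simp only [hq]; rw [if_neg (show t ≠ t₁ by omega), if_pos heq2]; ring
      have e2 : r t = s t := hr_out t (by omega)
      have e3 : r (t - 1) = s (t - 1) - P.Δt / P.ηD * P.ρ ^ (t - 1 - t₁) * ε :=
        hr_in _ (by omega) (by omega)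
      have epow : P.ρ ^ d = P.ρ ^ (t - 1 - t₁) * P.ρ := by
        rw [← pow_succ]; congr 1; omega
      have hnn : 0 ≤ P.ρ ^ d * ε := by positivity
      rw [e1, e2, e3]
      refine ⟨?_, flo, fhi, fc0, fcP, ?_, by linarith, ?_⟩
      · rw [feq, epow]; field_simp; ring
      · rw [heq2]; linarith
      · rw [heq2, hpC2]; ring
  have hrT : r T = Send := by
    rw [hr_out T (by omega)]; exact hsT
  have hprofit : profit P T C pC qD =
      profit P T C pC pD + P.Δt * C t₁ * ε - P.Δt * C t₂ * (P.ρ ^ d * ε) := by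
    unfold profit
    have key : ∀ t ∈ Finset.Icc 1 T, P.Δt * C t * (qD t - pC t) =
        P.Δt * C t * (pD t - pC t) + (if t = t₁ then P.Δt * C t * ε else 0)
          - (if t = t₂ then P.Δt * C t * (P.ρ ^ d * ε) else 0) := by
      intro t _
      simp only [hq]
      split_ifs <;> ring
    rw [Finset.sum_congr rfl key, Finset.sum_sub_distrib, Finset.sum_add_distrib,
      Finset.sum_ite_eq' (Finset.Icc 1 T) t₁ (fun t => P.Δt * C t * ε),
      Finset.sum_ite_eq' (Finset.Icc 1 T) t₂ (fun t => P.Δt * C t * (P.ρ ^ d * ε))]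
    have h1 : t₁ ∈ Finset.Icc 1 T := by simp only [Finset.mem_Icc]; omega
    have h2 : t₂ ∈ Finset.Icc 1 T := by simp only [Finset.mem_Icc]; omega
    rw [if_pos h1, if_pos h2]
  have hle := hopt pC qD r hfeas' hrT
  rw [hprofit] at hle
  have hkey : P.Δt * C t₁ * ε ≤ P.Δt * C t₂ * (P.ρ ^ d * ε) := by linarith
  nlinarith [mul_pos hΔt hε_pos]
end

section
/- (Marginal price relation, discharge–charge pair.) Let T ≥ 1 be a horizon, C : {1,…,T} → ℝ prices, S^end ∈ ℝ, and let x* = (p^{C*}, p^{D*}, s*) ∈ X(S^end) be an optimal schedule of F(T, C, S^end). Suppose t₁ < t₂ are in {1,…,T} with p^{C*}_{t₁} = 0, p^{D*}_{t₁} < P̄^D, p^{D*}_{t₂} = 0, p^{C*}_{t₂} < P̄^C, and s*_t > S̲ for all t ∈ {t₁,…,t₂−1}. Then η^C η^D C_{t₁} ≤ ρ^{t₂−t₁} C_{t₂}. -/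
open Finset

set_option maxHeartbeats 1000000 in
/-- Marginal price relation (discharge–charge pair): if an optimal schedule
does not charge at t₁ and has slack discharge capacity there, does not
discharge at t₂ > t₁ and has slack charge capacity there, with the state of
energy strictly above S̲ on {t₁,…,t₂−1}, then η^C η^D C_{t₁} ≤ ρ^{t₂−t₁} C_{t₂}. -/
theorem marginal_discharge_charge (P : Params) (hP : P.Valid) (T : ℕ) (hT : 1 ≤ T)
    (C : ℕ → ℝ) (Send : ℝ) (pC pD s : ℕ → ℝ) (hx : Optimal P T C Send pC pD s)
    (t₁ t₂ : ℕ) (ht₁ : 1 ≤ t₁) (h12 : t₁ < t₂) (ht₂ : t₂ ≤ T)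
    (hc : pC t₁ = 0) (hslackD : pD t₁ < P.PD)
    (hd : pD t₂ = 0) (hslackC : pC t₂ < P.PC)
    (hs : ∀ t : ℕ, t₁ ≤ t → t ≤ t₂ - 1 → P.Slo < s t) :
    P.ηC * P.ηD * C t₁ ≤ P.ρ ^ (t₂ - t₁) * C t₂ := by
  obtain ⟨⟨hs0, hfeas⟩, hsT, hopt⟩ := hx
  obtain ⟨hΔt, hρ, hρ1, hηC, hηC1, hηD, hηD1, hPC, hPD, hSS, _, _⟩ := hP
  set k := t₂ - t₁ with hk
  have hkpos : 0 < P.ρ ^ k := pow_pos hρ k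
  -- minimum slack of the state above Slo on [t₁, t₂-1]
  have hne : (Finset.Icc t₁ (t₂ - 1)).Nonempty := ⟨t₁, by simp only [Finset.mem_Icc]; omega⟩
  set m := (Finset.Icc t₁ (t₂ - 1)).inf' hne (fun t => s t - P.Slo) with hm
  have hmpos : 0 < m := by
    rw [hm, Finset.lt_inf'_iff]
    intro b hb
    rw [Finset.mem_Icc] at hb
    have := hs b hb.1 hb.2
    linarith
  -- the perturbation size
  set ε : ℝ := min (min (P.PD - pD t₁) ((P.PC - pC t₂) * (P.ηC * P.ηD) / P.ρ ^ k))
      (m * P.ηD / P.Δt) with hε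
  have hεpos : 0 < ε := by
    apply lt_min (lt_min (by linarith) _) (by positivity)
    have h1 : 0 < P.PC - pC t₂ := by linarith
    positivity
  set δ : ℝ := P.ρ ^ k * ε / (P.ηC * P.ηD) with hδ
  have hδpos : 0 < δ := by rw [hδ]; positivity
  have hδle : δ ≤ P.PC - pC t₂ := by
    have h1 : ε ≤ (P.PC - pC t₂) * (P.ηC * P.ηD) / P.ρ ^ k :=
      le_trans (min_le_left _ _) (min_le_right _ _)
    rw [hδ, div_le_iff₀ (by positivity)]
    rw [le_div_iff₀ hkpos] at h1
    nlinarith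
  have hεleD : ε ≤ P.PD - pD t₁ := le_trans (min_le_left _ _) (min_le_left _ _)
  have hcm : P.Δt * ε / P.ηD ≤ m := by
    have h1 : ε ≤ m * P.ηD / P.Δt := min_le_right _ _
    rw [div_le_iff₀ hηD]
    rw [le_div_iff₀ hΔt] at h1
    nlinarith
  have hc0 : 0 ≤ P.Δt * ε / P.ηD := by positivity
  -- perturbed schedule
  set qD : ℕ → ℝ := fun u => if u = t₁ then pD u + ε else pD u with hqD
  set qC : ℕ → ℝ := fun u => if u = t₂ then pC u + δ else pC u with hqC
  set r : ℕ → ℝ := fun u =>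
      if t₁ ≤ u ∧ u < t₂ then s u - P.ρ ^ (u - t₁) * (P.Δt * ε / P.ηD) else s u with hr
  have hrSlo : ∀ u : ℕ, t₁ ≤ u → u < t₂ → P.Slo ≤ s u - P.ρ ^ (u - t₁) * (P.Δt * ε / P.ηD) := by
    intro u hu1 hu2
    have hmem : u ∈ Finset.Icc t₁ (t₂ - 1) := by rw [Finset.mem_Icc]; omega
    have h1 : m ≤ s u - P.Slo := Finset.inf'_le (fun t => s t - P.Slo) hmem
    have h2 : P.ρ ^ (u - t₁) ≤ 1 := pow_le_one₀ (le_of_lt hρ) hρ1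
    nlinarith
  have hfeas' : Feasible P T qC qD r := by
    constructor
    · rw [hr]
      simp only
      rw [if_neg (by omega)]
      exact hs0
    · intro t h1t h2t
      obtain ⟨heq, hlo, hhi, hc0', hcP, hd0', hdP, hcd⟩ := hfeas t h1t h2t
      rw [hqD, hqC, hr]
      simp only
      by_cases hA : t < t₁
      · rw [if_neg (show ¬ t = t₁ by omega), if_neg (show ¬ t = t₂ by omega),
          if_neg (show ¬ (t₁ ≤ t ∧ t < t₂) by omega),
          if_neg (show ¬ (t₁ ≤ t - 1 ∧ t - 1 < t₂) by omega)]
        exact ⟨heq, hlo, hhi, hc0', hcP, hd0', hdP, hcd⟩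
      · by_cases hB : t = t₁
        · rw [if_pos hB, if_neg (show ¬ t = t₂ by omega),
            if_pos (show t₁ ≤ t ∧ t < t₂ by omega),
            if_neg (show ¬ (t₁ ≤ t - 1 ∧ t - 1 < t₂) by omega)]
          have hzero : t - t₁ = 0 := by omega
          rw [hzero, pow_zero]
          have hc' : pC t = 0 := by rw [hB, hc]
          have hlo' : P.Slo ≤ s t - 1 * (P.Δt * ε / P.ηD) := by
            have h := hrSlo t (by omega) (by omega)
            rw [hzero, pow_zero] at h
            exact h
          have hdP' : pD t + ε ≤ P.PD := by rw [hB]; linarith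
          refine ⟨by linear_combination heq, hlo', by linarith [hc0], hc0', hcP,
            by linarith, hdP', by rw [hc']; ring⟩
        · by_cases hC : t < t₂
          · -- t₁ < t < t₂
            rw [if_neg (show ¬ t = t₁ by omega), if_neg (show ¬ t = t₂ by omega),
              if_pos (show t₁ ≤ t ∧ t < t₂ by omega),
              if_pos (show t₁ ≤ t - 1 ∧ t - 1 < t₂ by omega)]
            have hexp : t - t₁ = (t - 1 - t₁) + 1 := by omega
            rw [hexp, pow_succ]
            have hnn : 0 ≤ P.ρ ^ (t - 1 - t₁) * P.ρ * (P.Δt * ε / P.ηD) :=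
              mul_nonneg (mul_nonneg (le_of_lt (pow_pos hρ _)) (le_of_lt hρ)) hc0
            refine ⟨by linear_combination heq, ?_, by linarith [hnn], hc0', hcP, hd0', hdP, hcd⟩
            have := hrSlo t (by omega) hC
            rw [hexp, pow_succ] at this
            exact this
          · by_cases hD : t = t₂
            · rw [if_neg (show ¬ t = t₁ by omega), if_pos hD,
                if_neg (show ¬ (t₁ ≤ t ∧ t < t₂) by omega),
                if_pos (show t₁ ≤ t - 1 ∧ t - 1 < t₂ by omega)]
              have hexp : k = (t - 1 - t₁) + 1 := by omega
              have hd' : pD t = 0 := by rw [hD, hd]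
              have hcP' : pC t + δ ≤ P.PC := by rw [hD]; linarith
              refine ⟨?_, hlo, hhi, by linarith, hcP', hd0', hdP, by rw [hd']; ring⟩
              have h1 : P.ηC ≠ 0 := ne_of_gt hηC
              have h2 : P.ηD ≠ 0 := ne_of_gt hηD
              rw [heq, hδ, hexp, pow_succ]
              field_simp
              ring
            · -- t > t₂
              rw [if_neg (show ¬ t = t₁ by omega), if_neg (show ¬ t = t₂ by omega),
                if_neg (show ¬ (t₁ ≤ t ∧ t < t₂) by omega),
                if_neg (show ¬ (t₁ ≤ t - 1 ∧ t - 1 < t₂) by omega)]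
              exact ⟨heq, hlo, hhi, hc0', hcP, hd0', hdP, hcd⟩
  have hrT : r T = Send := by
    rw [hr]; simp only
    rw [if_neg (by omega)]
    exact hsT
  have hle := hopt qC qD r hfeas' hrT
  have hmem1 : t₁ ∈ Finset.Icc 1 T := by rw [Finset.mem_Icc]; omega
  have hmem2 : t₂ ∈ Finset.Icc 1 T := by rw [Finset.mem_Icc]; omega
  have hprofit : profit P T C qC qD
      = profit P T C pC pD + P.Δt * C t₁ * ε - P.Δt * C t₂ * δ := by
    unfold profit
    rw [hqC, hqD]
    simp only
    have hcongr : ∀ t ∈ Finset.Icc 1 T,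
        P.Δt * C t * ((if t = t₁ then pD t + ε else pD t) - (if t = t₂ then pC t + δ else pC t))
        = P.Δt * C t * (pD t - pC t)
          + (if t = t₁ then P.Δt * C t₁ * ε else 0)
          - (if t = t₂ then P.Δt * C t₂ * δ else 0) := by
      intro t _
      by_cases h1 : t = t₁
      · subst h1
        rw [if_pos rfl, if_pos rfl, if_neg (by omega), if_neg (by omega)]
        ring
      · by_cases h2 : t = t₂
        · subst h2
          rw [if_neg h1, if_neg h1, if_pos rfl, if_pos rfl]
          ring
        · rw [if_neg h1, if_neg h1, if_neg h2, if_neg h2]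
          ring
    rw [Finset.sum_congr rfl hcongr]
    rw [Finset.sum_sub_distrib, Finset.sum_add_distrib, Finset.sum_ite_eq' _ t₁,
      Finset.sum_ite_eq' _ t₂, if_pos hmem1, if_pos hmem2]
  rw [hprofit] at hle
  have key : P.Δt * C t₁ * ε ≤ P.Δt * C t₂ * δ := by linarith
  have h2 : (P.Δt * ε) * (P.ηC * P.ηD * C t₁) ≤ (P.Δt * ε) * (P.ρ ^ k * C t₂) := by
    calc (P.Δt * ε) * (P.ηC * P.ηD * C t₁) = (P.Δt * C t₁ * ε) * (P.ηC * P.ηD) := by ring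
      _ ≤ (P.Δt * C t₂ * δ) * (P.ηC * P.ηD) :=
          mul_le_mul_of_nonneg_right key (by positivity)
      _ = (P.Δt * ε) * (P.ρ ^ k * C t₂) := by rw [hδ]; field_simp
  exact le_of_mul_le_mul_left h2 (by positivity)
end

section
/- (Mirror marginal price relation, discharge–discharge pair with slack above.) Let T ≥ 1 be a horizon, C : {1,…,T} → ℝ prices, S^end ∈ ℝ, and let x = (p^C, p^D, s) ∈ X(S^end) be an optimal schedule of F(T, C, S^end). Suppose t₁ < t₂ are in {1,…,T} with p^D_{t₁} > 0, p^C_{t₂} = 0, p^D_{t₂} < P̄^D, and s_t < S̄ for all t ∈ {t₁,…,t₂−1}. Then C_{t₁} ≥ ρ^{t₂−t₁} C_{t₂}. -/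
/-! Exchange argument. Move ε of discharge from t₁ to t₂, where it reappears as
ρ^(t₂-t₁) ε because of leakage. The state of energy rises by ρ^(t-t₁) Δt ε / η^D on
{t₁,…,t₂-1} and is unchanged elsewhere, so for small ε > 0 the new schedule is feasible
(discharge at t₁ is positive, slack exists at t₂, and the state has room below S̄)
with the same terminal level. Its profit differs by -Δt ε (C t₁ - ρ^(t₂-t₁) C t₂),
which optimality forces to be ≤ 0. -/

open Finset

open Filter Topology

section Perturbation

variable (ρ : ℝ) (t₁ t₂ : ℕ)

def shiftDischarge (ε : ℝ) (pD : ℕ → ℝ) (t : ℕ) : ℝ :=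
  pD t - (if t = t₁ then ε else 0) + if t = t₂ then ρ ^ (t₂ - t₁) * ε else 0

def raiseState (δ : ℝ) (s : ℕ → ℝ) (t : ℕ) : ℝ :=
  s t + if t ∈ Ico t₁ t₂ then ρ ^ (t - t₁) * δ else 0

variable {ρ t₁ t₂}

theorem raiseState_of_notMem {δ : ℝ} {s : ℕ → ℝ} {t : ℕ} (ht : t ∉ Ico t₁ t₂) :
    raiseState ρ t₁ t₂ δ s t = s t := by
  simp [raiseState, ht]

theorem raiseState_dynamics {Δt ηC ηD ε : ℝ} {pC pD s : ℕ → ℝ} (h12 : t₁ < t₂) {t : ℕ}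
    (ht : 1 ≤ t)
    (hs : s t = ρ * s (t - 1) + Δt * (ηC * pC t - pD t / ηD)) :
    raiseState ρ t₁ t₂ (Δt / ηD * ε) s t =
      ρ * raiseState ρ t₁ t₂ (Δt / ηD * ε) s (t - 1) +
        Δt * (ηC * pC t - shiftDischarge ρ t₁ t₂ ε pD t / ηD) := by
  have hpow : t₁ < t → ρ ^ (t - t₁) = ρ * ρ ^ (t - 1 - t₁) := fun h => by
    rw [← pow_succ', show t - 1 - t₁ + 1 = t - t₁ by omega]
  simp only [raiseState, shiftDischarge, mem_Ico, hs]
  split_ifs <;> subst_vars <;> first | omega | ring1 | (rw [hpow (by omega)]; ring) | (simp; ring)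

theorem profit_shiftDischarge {P : Params} {T : ℕ} {C pC pD : ℕ → ℝ} (ε : ℝ)
    (ht₁ : t₁ ∈ Icc 1 T) (ht₂ : t₂ ∈ Icc 1 T) :
    profit P T C pC (shiftDischarge P.ρ t₁ t₂ ε pD) =
      profit P T C pC pD - P.Δt * ε * (C t₁ - P.ρ ^ (t₂ - t₁) * C t₂) := by
  have hsplit : ∀ t, P.Δt * C t * (shiftDischarge P.ρ t₁ t₂ ε pD t - pC t) =
      P.Δt * C t * (pD t - pC t) - (if t = t₁ then P.Δt * C t₁ * ε else 0) +
        if t = t₂ then P.Δt * C t₂ * (P.ρ ^ (t₂ - t₁) * ε) else 0 := fun t => by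
    simp only [shiftDischarge]
    split_ifs <;> subst_vars <;> ring
  simp only [profit, hsplit, sum_add_distrib, sum_sub_distrib, sum_ite_eq', ht₁, ht₂, if_true]
  ring

theorem feasible_shiftDischarge {P : Params} (hP : P.Valid) {T : ℕ} {pC pD s : ℕ → ℝ}
    (hx : Feasible P T pC pD s) (ht₁ : 1 ≤ t₁) (h12 : t₁ < t₂)
    (hc₁ : pC t₁ = 0) (hc₂ : pC t₂ = 0) {ε : ℝ} (hε : 0 ≤ ε) (hε₁ : ε ≤ pD t₁)
    (hε₂ : ε ≤ P.PD - pD t₂)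
    (hroom : ∀ t ∈ Ico t₁ t₂, s t + P.Δt / P.ηD * ε ≤ P.Shi) :
    Feasible P T pC (shiftDischarge P.ρ t₁ t₂ ε pD)
      (raiseState P.ρ t₁ t₂ (P.Δt / P.ηD * ε) s) := by
  obtain ⟨hΔt, hρ, hρ1, -, -, hηD, -⟩ := hP
  have hδ : 0 ≤ P.Δt / P.ηD * ε := by positivity
  refine ⟨by rw [raiseState_of_notMem (by simp; omega), hx.1], fun t ht htT => ?_⟩
  obtain ⟨hrec, hlo, hhi, hc0, hcP, hd0, hdP, hcompl⟩ := hx.2 t ht htT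
  refine ⟨raiseState_dynamics h12 ht hrec, ?_, ?_, hc0, hcP, ?_, ?_, ?_⟩
  · simp only [raiseState]
    split_ifs <;> nlinarith [pow_nonneg hρ.le (t - t₁)]
  · simp only [raiseState]
    split_ifs with hmem
    · nlinarith [pow_le_one₀ hρ.le hρ1 (n := t - t₁), hroom t hmem]
    · simpa
  all_goals
    have hkε₀ : 0 ≤ P.ρ ^ (t₂ - t₁) * ε := by positivity
    have hkε : P.ρ ^ (t₂ - t₁) * ε ≤ ε := mul_le_of_le_one_left hε (pow_le_one₀ hρ.le hρ1)
    simp only [shiftDischarge]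
    split_ifs <;> subst_vars <;> first | omega | linarith | simp [*]

end Perturbation

theorem eventually_add_mul_le {a c : ℝ} (b : ℝ) (h : a < c) :
    ∀ᶠ ε in 𝓝 (0 : ℝ), a + b * ε ≤ c := by
  have : Tendsto (fun ε => a + b * ε) (𝓝 0) (𝓝 a) :=
    (continuous_const.add (continuous_const.mul continuous_id)).tendsto' 0 a (by simp)
  exact this.eventually (eventually_le_nhds h)

theorem mirror_discharge_discharge_general (P : Params) (hP : P.Valid) (T : ℕ)
    (C : ℕ → ℝ) (Send : ℝ) (pC pD s : ℕ → ℝ) (hx : Optimal P T C Send pC pD s)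
    (t₁ t₂ : ℕ) (ht₁ : 1 ≤ t₁) (h12 : t₁ < t₂) (ht₂ : t₂ ≤ T)
    (hd : 0 < pD t₁) (hc : pC t₂ = 0) (hslack : pD t₂ < P.PD)
    (hs : ∀ t : ℕ, t₁ ≤ t → t ≤ t₂ - 1 → s t < P.Shi) :
    P.ρ ^ (t₂ - t₁) * C t₂ ≤ C t₁ := by
  obtain ⟨hfeas, hend, hopt⟩ := hx
  have hpC₁ : pC t₁ = 0 :=
    (mul_eq_zero.mp (hfeas.2 t₁ ht₁ (by omega)).2.2.2.2.2.2.2).resolve_right hd.ne'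
  have hsmall : ∀ᶠ ε in 𝓝[>] (0 : ℝ), 0 < ε ∧ ε ≤ pD t₁ ∧ ε ≤ P.PD - pD t₂ ∧
      ∀ t ∈ Ico t₁ t₂, s t + P.Δt / P.ηD * ε ≤ P.Shi := by
    refine Eventually.and self_mem_nhdsWithin (nhdsWithin_le_nhds ?_)
    refine (eventually_le_nhds hd).and ((eventually_le_nhds (sub_pos.mpr hslack)).and ?_)
    exact (eventually_all_finset _).mpr fun t ht =>
      eventually_add_mul_le _ (hs t (mem_Ico.mp ht).1 (Nat.le_sub_one_of_lt (mem_Ico.mp ht).2))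
  obtain ⟨ε, hε, hε₁, hε₂, hroom⟩ := hsmall.exists
  have hrival := hopt _ _ _
    (feasible_shiftDischarge hP hfeas ht₁ h12 hpC₁ hc hε.le hε₁ hε₂ hroom)
    (by rw [raiseState_of_notMem (by simp; omega), hend])
  rw [profit_shiftDischarge ε (mem_Icc.mpr ⟨ht₁, by omega⟩) (mem_Icc.mpr ⟨by omega, ht₂⟩)]
    at hrival
  have hgain : 0 ≤ P.Δt * ε * (C t₁ - P.ρ ^ (t₂ - t₁) * C t₂) := by linarith
  linarith [(mul_nonneg_iff_of_pos_left (mul_pos hP.1 hε)).mp hgain]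

/-- Mirror marginal price relation (discharge–discharge pair with slack above):
if an optimal schedule discharges at t₁, does not charge at t₂ > t₁ and has
slack discharge capacity there, with the state of energy strictly below S̄ on
{t₁,…,t₂−1}, then C_{t₁} ≥ ρ^{t₂−t₁} C_{t₂}. -/
theorem mirror_discharge_discharge (P : Params) (hP : P.Valid) (T : ℕ) (hT : 1 ≤ T)
    (C : ℕ → ℝ) (Send : ℝ) (pC pD s : ℕ → ℝ) (hx : Optimal P T C Send pC pD s)
    (t₁ t₂ : ℕ) (ht₁ : 1 ≤ t₁) (h12 : t₁ < t₂) (ht₂ : t₂ ≤ T)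
    (hd : 0 < pD t₁) (hc : pC t₂ = 0) (hslack : pD t₂ < P.PD)
    (hs : ∀ t : ℕ, t₁ ≤ t → t ≤ t₂ - 1 → s t < P.Shi) :
    P.ρ ^ (t₂ - t₁) * C t₂ ≤ C t₁ :=
  mirror_discharge_discharge_general P hP T C Send pC pD s hx t₁ t₂ ht₁ h12 ht₂ hd hc hslack hs
end

section
/- (Non-existence of a forecast horizon, Section 3.3 example.) Assume ρ = 1, η^C η^D < 1, the storage can be fully charged or discharged in one period, i.e. Δt η^C P̄^C ≥ S̄ − S̲ and Δt P̄^D / η^D ≥ S̄ − S̲, and S̲ < S^init < S̄. Let T ≥ 2 and let prices C : {1,…,T} → ℝ satisfy C_1 > 0 and η^C η^D C_1 < C_t < C_1 for all t ∈ {2,…,T}. Then for the decision horizon H = 1, there do not exist optimal schedules x̲ = (p̲^C, p̲^D, s̲) ∈ X̲ and x̄ = (p̄^C, p̄^D, s̄) ∈ X̄ with s̲_1 = s̄_1; indeed every x̲ ∈ X̲ has s̲_1 = S̲ while every x̄ ∈ X̄ has s̄_1 ≥ S^init > S̲. -/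
open Finset

noncomputable def stepval (ηC ηD c a b : ℝ) : ℝ :=
  if a ≤ b then -(c / ηC * (b - a)) else c * ηD * (a - b)

lemma tele (g : ℕ → ℝ) (T : ℕ) : ∑ t ∈ Icc 1 T, (g (t-1) - g t) = g 0 - g T := by
  induction T with
  | zero => simp
  | succ n ih =>
    rw [Finset.sum_Icc_succ_top (Nat.le_add_left 1 n), ih]
    simp

lemma step_le {ηC ηD C1 c a b : ℝ} (hηC : 0 < ηC) (hηD : 0 < ηD) (hC1 : 0 < C1)
    (hc1 : ηC * ηD * C1 ≤ c) (hc2 : c ≤ C1) :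
    stepval ηC ηD c a b ≤ ηD * C1 * (a - b) := by
  have hd : ηD * C1 ≤ c / ηC := by
    rw [le_div_iff₀ hηC]; nlinarith
  unfold stepval
  split_ifs with h
  · nlinarith [mul_nonneg (sub_nonneg.2 hd) (sub_nonneg.2 h)]
  · push_neg at h
    nlinarith [mul_nonneg (mul_nonneg hηD.le (sub_nonneg.2 hc2)) (sub_nonneg.2 h.le)]

lemma step_lt {ηC ηD C1 c a b : ℝ} (hηC : 0 < ηC) (hηD : 0 < ηD) (hC1 : 0 < C1)
    (hc1 : ηC * ηD * C1 < c) (hc2 : c < C1) (hab : a ≠ b) :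
    stepval ηC ηD c a b < ηD * C1 * (a - b) := by
  have hd : ηD * C1 < c / ηC := by
    rw [lt_div_iff₀ hηC]; nlinarith
  unfold stepval
  split_ifs with h
  · have h' : a < b := lt_of_le_of_ne h hab
    nlinarith [mul_pos (sub_pos.2 hd) (sub_pos.2 h')]
  · push_neg at h
    nlinarith [mul_pos (mul_pos hηD (sub_pos.2 hc2)) (sub_pos.2 h)]

lemma clamp_step_ge {ηC ηD C1 c a b m : ℝ} (hηC : 0 < ηC) (hηD : 0 < ηD) (hC1 : 0 < C1)
    (hc1 : ηC * ηD * C1 ≤ c) (hc2 : c ≤ C1) :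
    stepval ηC ηD c a b + ηD * C1 * ((max a m - a) - (max b m - b))
      ≤ stepval ηC ηD c (max a m) (max b m) := by
  have hd : ηD * C1 ≤ c / ηC := by
    rw [le_div_iff₀ hηC]; nlinarith
  have hcd : 0 ≤ c := le_trans (by positivity) hc1
  rcases le_total a m with h1 | h1 <;> rcases le_total b m with h2 | h2 <;>
    simp only [max_eq_right h1, max_eq_left h1, max_eq_right h2, max_eq_left h2] <;>
    unfold stepval <;> split_ifs with h3 h4 <;>
    (try push_neg at *) <;>
    nlinarith [mul_nonneg (sub_nonneg.2 hd) (sub_nonneg.2 h1),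
      mul_nonneg (sub_nonneg.2 hd) (sub_nonneg.2 h2),
      mul_nonneg (mul_nonneg hηD.le (sub_nonneg.2 hc2)) (sub_nonneg.2 h1),
      mul_nonneg (mul_nonneg hηD.le (sub_nonneg.2 hc2)) (sub_nonneg.2 h2),
      mul_pos hηD hC1, div_nonneg hcd hηC.le]

lemma clamp_step_gt {ηC ηD C1 c a b m : ℝ} (hηC : 0 < ηC) (hηD : 0 < ηD) (hC1 : 0 < C1)
    (hc1 : ηC * ηD * C1 < c) (hc2 : c ≤ C1)
    (hw : max b m - b < max a m - a) :
    stepval ηC ηD c a b + ηD * C1 * ((max a m - a) - (max b m - b))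
      < stepval ηC ηD c (max a m) (max b m) := by
  have hd : ηD * C1 < c / ηC := by
    rw [lt_div_iff₀ hηC]; nlinarith
  have ham : a < m := by
    rcases le_total a m with h1 | h1
    · rcases le_total b m with h2 | h2
      · rw [max_eq_right h1, max_eq_right h2] at hw
        rcases eq_or_lt_of_le h1 with rfl | h; · linarith
        exact h
      · rw [max_eq_right h1, max_eq_left h2] at hw
        rcases eq_or_lt_of_le h1 with rfl | h; · linarith
        exact h
    · rw [max_eq_left h1] at hw
      have : max b m - b ≥ 0 := by simp [le_max_right]
      linarith
  rw [max_eq_right ham.le] at hw ⊢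
  have hab : a < b := by
    have : max b m - b ≥ m - b := by simp [le_max_right]
    linarith
  have hb' : m ≤ max b m := le_max_right b m
  unfold stepval
  rw [if_pos hab.le, if_pos hb']
  rcases le_total b m with h2 | h2
  · rw [max_eq_right h2]
    nlinarith [mul_pos (sub_pos.2 hd) (sub_pos.2 ham)]
  · rw [max_eq_left h2] at hw ⊢
    nlinarith [mul_pos (sub_pos.2 hd) (sub_pos.2 ham)]

lemma step_eq (P : Params) (hP : P.Valid) (hρ : P.ρ = 1) {T : ℕ} {pC pD s : ℕ → ℝ}
    (hf : Feasible P T pC pD s) {t : ℕ} (h1 : 1 ≤ t) (h2 : t ≤ T) (c : ℝ) :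
    P.Δt * c * (pD t - pC t) = stepval P.ηC P.ηD c (s (t-1)) (s t) := by
  obtain ⟨hΔt, hρ0, hρ1, hηC, hηC1, hηD, hηD1, _⟩ := hP
  obtain ⟨hrec, _, _, hCn, hCb, hDn, hDb, hcomp⟩ := hf.2 t h1 h2
  rw [hρ, one_mul] at hrec
  rcases mul_eq_zero.mp hcomp with h | h
  · -- pC t = 0
    rw [h]
    have hst : s (t-1) - s t = P.Δt * pD t / P.ηD := by
      rw [hrec, h]; field_simp; ring
    have hab : s t ≤ s (t-1) := by
      rw [← sub_nonneg, hst]; positivity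
    rcases eq_or_lt_of_le hab with he | he
    · have hpD : pD t = 0 := by
        have h0 : P.Δt * pD t / P.ηD = 0 := by rw [← hst, ← he]; ring
        have := div_eq_zero_iff.mp h0
        rcases this with h' | h'
        · rcases mul_eq_zero.mp h' with h'' | h''
          · exact absurd h'' hΔt.ne'
          · exact h''
        · exact absurd h' hηD.ne'
      rw [hpD, stepval, if_pos he.ge, ← he]
      ring
    · rw [stepval, if_neg (not_le.2 he), hst]
      field_simp
      ring
  · -- pD t = 0
    rw [h]
    have hst : s t - s (t-1) = P.Δt * P.ηC * pC t := by
      rw [hrec, h]; ring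
    have hab : s (t-1) ≤ s t := by
      rw [← sub_nonneg, hst]; positivity
    rw [stepval, if_pos hab, hst]
    field_simp
    ring

lemma profit_eq (P : Params) (hP : P.Valid) (hρ : P.ρ = 1) {T : ℕ} {pC pD s : ℕ → ℝ}
    (hf : Feasible P T pC pD s) (C : ℕ → ℝ) :
    profit P T C pC pD = ∑ t ∈ Icc 1 T, stepval P.ηC P.ηD (C t) (s (t-1)) (s t) := by
  unfold profit
  refine Finset.sum_congr rfl fun t ht => ?_
  rw [Finset.mem_Icc] at ht
  exact step_eq P hP hρ hf ht.1 ht.2 (C t)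

lemma chain_mono {g : ℕ → ℝ} {T : ℕ}
    (h : ∀ u : ℕ, 2 ≤ u → u ≤ T → g (u-1) ≤ g u) :
    ∀ n : ℕ, 1 ≤ n → n ≤ T → g 1 ≤ g n := by
  intro n h1 h2
  induction n, h1 using Nat.le_induction with
  | base => exact le_refl _
  | succ n hn ih =>
    have := h (n+1) (by omega) h2
    simp only [Nat.add_sub_cancel] at this
    exact le_trans (ih (by omega)) this

lemma chain_eq {g : ℕ → ℝ} {T : ℕ}
    (h : ∀ u : ℕ, 2 ≤ u → u ≤ T → g (u-1) = g u) :
    ∀ n : ℕ, 1 ≤ n → n ≤ T → g 1 = g n := by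
  intro n h1 h2
  induction n, h1 using Nat.le_induction with
  | base => rfl
  | succ n hn ih =>
    have := h (n+1) (by omega) h2
    simp only [Nat.add_sub_cancel] at this
    exact (ih (by omega)).trans this


/-- Non-existence of a forecast horizon (Section 3.3 example): with ρ = 1,
round-trip efficiency < 1, one-period full charge/discharge capability,
S̲ < S^init < S̄, C₁ > 0 and η^C η^D C₁ < C_t < C₁ for all t ∈ {2,…,T}, every
x̲ ∈ X̲ has s̲₁ = S̲, every x̄ ∈ X̄ has s̄₁ ≥ S^init > S̲, and hence no pair
x̲ ∈ X̲, x̄ ∈ X̄ has s̲₁ = s̄₁. -/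
theorem no_forecast_horizon (P : Params) (hP : P.Valid)
    (hρ : P.ρ = 1) (hη : P.ηC * P.ηD < 1)
    (hfullC : P.Shi - P.Slo ≤ P.Δt * P.ηC * P.PC)
    (hfullD : P.Shi - P.Slo ≤ P.Δt * P.PD / P.ηD)
    (hinit1 : P.Slo < P.Sinit) (hinit2 : P.Sinit < P.Shi)
    (T : ℕ) (hT : 2 ≤ T) (C : ℕ → ℝ) (hC1 : 0 < C 1)
    (hCt : ∀ t : ℕ, 2 ≤ t → t ≤ T → P.ηC * P.ηD * C 1 < C t ∧ C t < C 1) :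
    (∀ pCl pDl sl : ℕ → ℝ, Optimal P T C (SloT P T) pCl pDl sl → sl 1 = P.Slo) ∧
    (∀ pCb pDb sb : ℕ → ℝ, Optimal P T C (ShiT P T) pCb pDb sb → P.Sinit ≤ sb 1) ∧
    ¬ ∃ pCl pDl sl pCb pDb sb : ℕ → ℝ,
        Optimal P T C (SloT P T) pCl pDl sl ∧
        Optimal P T C (ShiT P T) pCb pDb sb ∧ sl 1 = sb 1 := by
  obtain ⟨hΔt, hρ0, hρ1, hηC, hηC1, hηD, hηD1, hPC, hPD, hSS, hS1, hS2⟩ := id hP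
  have hT1 : 1 ≤ T := by omega
  have hT2 : (2:ℝ) ≤ (T:ℝ) := by exact_mod_cast hT
  have hfullD' : (P.Shi - P.Slo) * P.ηD ≤ P.Δt * P.PD := (le_div_iff₀ hηD).mp hfullD
  have hSloT : SloT P T = P.Slo := by
    unfold SloT
    rw [hρ]
    simp only [one_pow, sum_const, card_range, nsmul_eq_mul, mul_one, one_mul]
    apply max_eq_left
    have hx : P.Shi - P.Slo ≤ P.Δt * (P.PD / P.ηD) := by
      rw [mul_div_assoc] at hfullD; exact hfullD
    have hx0 : 0 < P.Δt * (P.PD / P.ηD) := by positivity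
    nlinarith [mul_le_mul_of_nonneg_left hT2 hx0.le]
  have hShiT : ShiT P T = P.Shi := by
    unfold ShiT
    rw [hρ]
    simp only [one_pow, sum_const, card_range, nsmul_eq_mul, mul_one, one_mul]
    apply min_eq_left
    have hx0 : 0 < P.Δt * P.ηC * P.PC := by positivity
    nlinarith [mul_le_mul_of_nonneg_left hT2 hx0.le]
  have hCb : ∀ t : ℕ, 1 ≤ t → t ≤ T → P.ηC * P.ηD * C 1 ≤ C t ∧ C t ≤ C 1 := by
    intro t h1 h2
    rcases eq_or_lt_of_le h1 with h | h
    · rw [← h]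
      exact ⟨by nlinarith, le_refl _⟩
    · exact ⟨(hCt t h h2).1.le, (hCt t h h2).2.le⟩
  have key1 : ∀ pCl pDl sl : ℕ → ℝ, Optimal P T C (SloT P T) pCl pDl sl → sl 1 = P.Slo := by
    intro pCl pDl sl hopt
    obtain ⟨hfeas, hsT, hmax⟩ := hopt
    rw [hSloT] at hsT
    by_contra hne
    classical
    set qD : ℕ → ℝ := fun t => if t = 1 then P.ηD * (P.Sinit - P.Slo) / P.Δt else 0 with hqD
    set r : ℕ → ℝ := fun t => if t = 0 then P.Sinit else P.Slo with hrr
    have hfq : Feasible P T (fun _ => 0) qD r := by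
      refine ⟨by simp [hrr], fun t h1 h2 => ?_⟩
      have ht0 : t ≠ 0 := by omega
      have hrt : r t = P.Slo := by simp [hrr, ht0]
      have hq0 : 0 ≤ P.ηD * (P.Sinit - P.Slo) / P.Δt :=
        div_nonneg (mul_nonneg hηD.le (by linarith)) hΔt.le
      have hqPD : P.ηD * (P.Sinit - P.Slo) / P.Δt ≤ P.PD := by
        rw [div_le_iff₀ hΔt]
        have h' := mul_le_mul_of_nonneg_right
          (show P.Sinit - P.Slo ≤ P.Shi - P.Slo by linarith) hηD.le
        linarith [hfullD']
      refine ⟨?_, by rw [hrt], by rw [hrt]; exact hSS, le_refl 0, hPC.le, ?_, ?_, by simp⟩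
      · rcases eq_or_ne t 1 with rfl | ht1
        · simp only [hrr, hrt, hqD, hρ, if_pos rfl]
          norm_num
          field_simp
          ring
        · have hrt1 : r (t-1) = P.Slo := by
            have : t - 1 ≠ 0 := by omega
            simp [hrr, this]
          simp only [hrt, hrt1, hqD, if_neg ht1, hρ]
          norm_num
      · simp only [hqD]
        split_ifs
        · exact hq0
        · exact le_refl 0
      · simp only [hqD]
        split_ifs
        · exact hqPD
        · exact hPD.le
    have hrT : r T = P.Slo := by
      have : T ≠ 0 := by omega
      simp [hrr, this]
    have hqprofit : profit P T C (fun _ => 0) qD = P.ηD * C 1 * (P.Sinit - P.Slo) := by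
      unfold profit
      rw [Finset.sum_eq_single 1]
      · simp only [hqD, if_pos rfl]
        field_simp
        ring
      · intro b _ hb1
        simp [hqD, hb1]
      · intro h
        exact absurd (Finset.mem_Icc.mpr ⟨le_refl 1, hT1⟩) h
    have hne' : sl 1 ≠ sl T := by rw [hsT]; exact hne
    have hex : ∃ u : ℕ, 2 ≤ u ∧ u ≤ T ∧ sl (u-1) ≠ sl u := by
      by_contra hc
      push_neg at hc
      exact hne' (chain_eq hc T hT1 (le_refl T))
    obtain ⟨u, hu2, huT, hune⟩ := hex
    have hsum : profit P T C pCl pDl < ∑ t ∈ Icc 1 T, P.ηD * C 1 * (sl (t-1) - sl t) := by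
      rw [profit_eq P hP hρ hfeas C]
      apply Finset.sum_lt_sum
      · intro i hi
        rw [Finset.mem_Icc] at hi
        exact step_le hηC hηD hC1 (hCb i hi.1 hi.2).1 (hCb i hi.1 hi.2).2
      · refine ⟨u, Finset.mem_Icc.mpr ⟨by omega, huT⟩, ?_⟩
        exact step_lt hηC hηD hC1 (hCt u hu2 huT).1 (hCt u hu2 huT).2 hune
    have htel : ∑ t ∈ Icc 1 T, P.ηD * C 1 * (sl (t-1) - sl t) = P.ηD * C 1 * (P.Sinit - P.Slo) := by
      rw [← Finset.mul_sum, tele sl T, hfeas.1, hsT]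
    have hle := hmax (fun _ => 0) qD r hfq (by rw [hrT, hSloT])
    rw [hqprofit] at hle
    rw [htel] at hsum
    linarith
  have key2 : ∀ pCb pDb sb : ℕ → ℝ, Optimal P T C (ShiT P T) pCb pDb sb → P.Sinit ≤ sb 1 := by
    intro pCb pDb sb hopt
    obtain ⟨hfeas, hsT, hmax⟩ := hopt
    rw [hShiT] at hsT
    by_contra hlt
    push_neg at hlt
    set r : ℕ → ℝ := fun t => max (sb t) P.Sinit with hrr
    set qC : ℕ → ℝ := fun t => max 0 ((r t - r (t-1)) / (P.Δt * P.ηC)) with hqC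
    set qD : ℕ → ℝ := fun t => max 0 ((r (t-1) - r t) * P.ηD / P.Δt) with hqD
    have hr0 : r 0 = P.Sinit := by simp [hrr, hfeas.1]
    have hrange' : ∀ t, t ≤ T → P.Slo ≤ r t ∧ r t ≤ P.Shi := by
      intro t ht
      rcases Nat.eq_zero_or_pos t with rfl | h
      · rw [hr0]; exact ⟨hS1, hS2⟩
      · obtain ⟨_, hl, hu, _⟩ := hfeas.2 t h ht
        exact ⟨le_trans hS1 (le_max_right _ _), max_le hu hS2⟩
    have hΔηC : 0 < P.Δt * P.ηC := by positivity
    have hfq : Feasible P T qC qD r := by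
      refine ⟨hr0, fun t h1 h2 => ?_⟩
      have ha := hrange' (t-1) (by omega)
      have hb := hrange' t h2
      rcases le_total (r (t-1)) (r t) with hc | hc
      · have hqDt : qD t = 0 := by
          apply max_eq_left
          apply div_nonpos_of_nonpos_of_nonneg _ hΔt.le
          have h' := mul_le_mul_of_nonneg_right
            (show r (t-1) - r t ≤ 0 by linarith) hηD.le
          linarith [h']
        have hqCt : qC t = (r t - r (t-1)) / (P.Δt * P.ηC) :=
          max_eq_right (div_nonneg (by linarith) hΔηC.le)
        refine ⟨?_, hb.1, hb.2, le_max_left _ _, ?_, le_max_left _ _, ?_, by rw [hqDt, mul_zero]⟩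
        · rw [hρ, one_mul, hqCt, hqDt]
          field_simp
          ring
        · rw [hqCt]
          rw [div_le_iff₀ hΔηC]
          linarith [hfullC, hb.2, ha.1]
        · rw [hqDt]
          exact hPD.le
      · have hqCt : qC t = 0 := by
          apply max_eq_left
          apply div_nonpos_of_nonpos_of_nonneg _ hΔηC.le
          linarith
        have hqDt : qD t = (r (t-1) - r t) * P.ηD / P.Δt :=
          max_eq_right (div_nonneg (mul_nonneg (by linarith) hηD.le) hΔt.le)
        refine ⟨?_, hb.1, hb.2, le_max_left _ _, ?_, le_max_left _ _, ?_, by rw [hqCt, zero_mul]⟩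
        · rw [hρ, one_mul, hqCt, hqDt]
          field_simp
          ring
        · rw [hqCt]
          exact hPC.le
        · rw [hqDt]
          rw [div_le_iff₀ hΔt]
          have h' := mul_le_mul_of_nonneg_right
            (show r (t-1) - r t ≤ P.Shi - P.Slo by linarith [ha.2, hb.1]) hηD.le
          linarith [h', hfullD']
    have hrT : r T = P.Shi := by
      rw [hrr]
      simp only [hsT]
      exact max_eq_left hS2
    have hδT : r T - sb T = 0 := by rw [hrT, hsT]; ring
    have hδ1 : 0 < r 1 - sb 1 := by
      have : r 1 = P.Sinit := max_eq_right hlt.le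
      rw [this]; linarith
    have hex : ∃ u : ℕ, 2 ≤ u ∧ u ≤ T ∧ (r u - sb u) < (r (u-1) - sb (u-1)) := by
      by_contra hc
      push_neg at hc
      have := chain_mono (g := fun n => r n - sb n) (fun u hu1 hu2 => hc u hu1 hu2) T hT1 (le_refl T)
      rw [hδT] at this
      linarith
    obtain ⟨u, hu2, huT, hud⟩ := hex
    have hgt : profit P T C pCb pDb < profit P T C qC qD := by
      rw [profit_eq P hP hρ hfeas C, profit_eq P hP hρ hfq C]
      have hlt2 : ∑ i ∈ Icc 1 T, (stepval P.ηC P.ηD (C i) (sb (i-1)) (sb i)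
            + P.ηD * C 1 * ((r (i-1) - sb (i-1)) - (r i - sb i)))
          < ∑ i ∈ Icc 1 T, stepval P.ηC P.ηD (C i) (r (i-1)) (r i) := by
        apply Finset.sum_lt_sum
        · intro i hi
          rw [Finset.mem_Icc] at hi
          exact clamp_step_ge hηC hηD hC1 (hCb i hi.1 hi.2).1 (hCb i hi.1 hi.2).2
        · refine ⟨u, Finset.mem_Icc.mpr ⟨by omega, huT⟩, ?_⟩
          exact clamp_step_gt hηC hηD hC1 (hCt u hu2 huT).1 (hCt u hu2 huT).2.le hud
      have hsplit : ∑ i ∈ Icc 1 T, (stepval P.ηC P.ηD (C i) (sb (i-1)) (sb i)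
            + P.ηD * C 1 * ((r (i-1) - sb (i-1)) - (r i - sb i)))
          = ∑ i ∈ Icc 1 T, stepval P.ηC P.ηD (C i) (sb (i-1)) (sb i)
            + P.ηD * C 1 * ((r 0 - sb 0) - (r T - sb T)) := by
        rw [Finset.sum_add_distrib, ← Finset.mul_sum, tele (fun n => r n - sb n) T]
      rw [hsplit] at hlt2
      rw [hr0, hfeas.1, hδT] at hlt2
      simpa using hlt2
    exact absurd (hmax qC qD r hfq (by rw [hrT, hShiT])) (not_le.mpr hgt)
  refine ⟨key1, key2, ?_⟩
  rintro ⟨pCl, pDl, sl, pCb, pDb, sb, h1, h2, heq⟩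
  have e1 := key1 _ _ _ h1
  have e2 := key2 _ _ _ h2
  rw [heq] at e1
  linarith
end
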